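/- Fix λ > 1 and d ∈ ℝ. For y > 0 let φ(y,d) denote the unique solution x ∈ (|d|/y, ∞) of the criticality equation L + M y²/√(x²y²−d²) = 2√(A(x,y,d)). Then y ↦ φ(y,d) is monotonically nonincreasing: if 0 < y₁ ≤ y₂ then φ(y₂,d) ≤ φ(y₁,d). -/

import Mathlib

/-!
Write `t = √(x²y² - d²)`, `u = x (L + M y² / t)` and `v = (L t + M x², L d + 2 x²) ∈ ℝ²`.
Since `L² = M² + 4`, one has `‖v‖² = 2 L x² A`, so the criticality function
`L + M y²/t - 2√A` is nonpositive exactly when `L u² / 2 ≤ ‖v‖²`. Fix `x` and let `y`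
grow; then `t` grows, and a sum-of-squares identity gives
`‖v(t₁)‖² u(t₂) ≤ ⟪v(t₁), v(t₂)⟫ u(t₁)` for `t₁ ≤ t₂`. By Cauchy–Schwarz this keeps `(u, v)`
inside the cone, so once the criticality function is nonpositive at `(x, y₁)`, it stays so
at `(x, y₂)` for all `y₂ ≥ y₁`. Since it is strictly decreasing in `x`, a root
`φ(y₂) > φ(y₁)` would make it positive at `(φ(y₁), y₂)`.
-/

noncomputable section

def Afun (l x y d : ℝ) : ℝ :=
  (x ^ 2 + y ^ 2) * (l ^ 2 + 1 / l ^ 2) / 2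
    + (l ^ 2 - 1 / l ^ 2) * Real.sqrt (x ^ 2 * y ^ 2 - d ^ 2) + 2 * d

open Real Set
open scoped RealInnerProductSpace

theorem mul_sq_le_norm_sq_of_norm_sq_mul_le_inner_mul {E : Type*} [NormedAddCommGroup E]
    [InnerProductSpace ℝ E] {c u₁ u₂ : ℝ} {v₁ v₂ : E} (hu₁ : 0 < u₁) (hu₂ : 0 ≤ u₂)
    (h₁ : c * u₁ ^ 2 ≤ ‖v₁‖ ^ 2) (h : ‖v₁‖ ^ 2 * u₂ ≤ ⟪v₁, v₂⟫ * u₁) :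
    c * u₂ ^ 2 ≤ ‖v₂‖ ^ 2 := by
  rcases (norm_nonneg v₁).eq_or_lt with hv₁ | hv₁
  · have hc : c ≤ 0 := by
      rw [← hv₁] at h₁
      nlinarith [pow_pos hu₁ 2]
    nlinarith [sq_nonneg u₂, sq_nonneg ‖v₂‖]
  · have hcs : ‖v₁‖ * u₂ ≤ ‖v₂‖ * u₁ := by
      refine le_of_mul_le_mul_left ?_ hv₁
      nlinarith [real_inner_le_norm v₁ v₂]
    have hsq := pow_le_pow_left₀ (by positivity) hcs 2
    have : c * u₂ ^ 2 * u₁ ^ 2 ≤ ‖v₂‖ ^ 2 * u₁ ^ 2 := by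
      nlinarith [mul_le_mul_of_nonneg_right h₁ (sq_nonneg u₂)]
    exact le_of_mul_le_mul_right this (by positivity)

def lamL (l : ℝ) : ℝ := l ^ 2 + 1 / l ^ 2

def lamM (l : ℝ) : ℝ := l ^ 2 - 1 / l ^ 2

theorem lamL_sq {l : ℝ} (hl : l ≠ 0) : lamL l ^ 2 = lamM l ^ 2 + 4 := by
  unfold lamL lamM
  field_simp
  ring

theorem two_le_lamL {l : ℝ} (hl : l ≠ 0) : 2 ≤ lamL l := by
  have h : lamL l - 2 = (l - 1 / l) ^ 2 := by
    unfold lamL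
    field_simp
    ring
  nlinarith [sq_nonneg (l - 1 / l)]

theorem lamM_pos {l : ℝ} (hl : 1 < l) : 0 < lamM l := by
  have hl2 : 1 < l ^ 2 := by nlinarith
  have : 1 / l ^ 2 < 1 := by rw [div_lt_one (by positivity)]; exact hl2
  unfold lamM
  linarith

theorem Afun_eq (l x y d : ℝ) :
    Afun l x y d = (x ^ 2 + y ^ 2) * lamL l / 2 + lamM l * √(x ^ 2 * y ^ 2 - d ^ 2) + 2 * d :=
  rfl

theorem sq_lt_sq_mul_sq_of_abs_lt {d x y : ℝ} (h : |d| < x * y) : d ^ 2 < x ^ 2 * y ^ 2 := by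
  rw [← mul_pow]
  exact sq_lt_sq' (abs_lt.1 h).1 (abs_lt.1 h).2

def criticality (l x y d : ℝ) : ℝ :=
  lamL l + lamM l * y ^ 2 / √(x ^ 2 * y ^ 2 - d ^ 2) - 2 * √(Afun l x y d)

theorem criticality_strictAntiOn {l y : ℝ} (d : ℝ) (hl : 1 < l) (hy : 0 < y) :
    StrictAntiOn (fun x ↦ criticality l x y d) (Ioi (|d| / y)) := by
  intro x hx x' hx' hxx'
  rw [mem_Ioi, div_lt_iff₀ hy] at hx hx'
  have hx0 : 0 < x := pos_of_mul_pos_left ((abs_nonneg d).trans_lt hx) hy.le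
  have hd := sq_lt_sq_mul_sq_of_abs_lt hx
  have hsq : x ^ 2 * y ^ 2 < x' ^ 2 * y ^ 2 := by gcongr
  have hs : √(x ^ 2 * y ^ 2 - d ^ 2) < √(x' ^ 2 * y ^ 2 - d ^ 2) :=
    sqrt_lt_sqrt (by linarith) (by linarith)
  have hM := lamM_pos hl
  have hA : √(Afun l x y d) ≤ √(Afun l x' y d) := by
    rw [Afun_eq, Afun_eq]
    gcongr
    exact (two_le_lamL (by positivity)).trans' zero_le_two
  have hfrac : lamM l * y ^ 2 / √(x' ^ 2 * y ^ 2 - d ^ 2)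
      < lamM l * y ^ 2 / √(x ^ 2 * y ^ 2 - d ^ 2) :=
    div_lt_div_of_pos_left (by positivity) (sqrt_pos.2 (by linarith)) hs
  simp only [criticality]
  linarith

section Cone

variable (L M x d : ℝ)

-- `critScalar t` and `critVec t` are `u` and `v` above, rewritten in `t` via `x²y² = t² + d²`.
def critVec (t : ℝ) : EuclideanSpace ℝ (Fin 2) := !₂[L * t + M * x ^ 2, L * d + 2 * x ^ 2]

def critScalar (t : ℝ) : ℝ := L * x + M * (t ^ 2 + d ^ 2) / (x * t)

theorem norm_sq_critVec (t : ℝ) :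
    ‖critVec L M x d t‖ ^ 2 = (L * t + M * x ^ 2) ^ 2 + (L * d + 2 * x ^ 2) ^ 2 := by
  simp [critVec, EuclideanSpace.norm_sq_eq, Fin.sum_univ_two]

theorem inner_critVec (t₁ t₂ : ℝ) :
    ⟪critVec L M x d t₁, critVec L M x d t₂⟫ =
      (L * t₁ + M * x ^ 2) * (L * t₂ + M * x ^ 2) + (L * d + 2 * x ^ 2) ^ 2 := by
  simp [critVec, PiLp.inner_apply, Fin.sum_univ_two, mul_comm, sq]

variable {L M x d}

theorem critScalar_pos (hL : 0 < L) (hM : 0 ≤ M) (hx : 0 < x) {t : ℝ} (ht : 0 < t) :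
    0 < critScalar L M x d t := by
  unfold critScalar
  positivity

theorem norm_sq_critVec_mul_le_inner_mul (hL : 2 ≤ L) (hM : 0 ≤ M) (hLM : L ^ 2 = M ^ 2 + 4)
    (hx : 0 < x) {t₁ t₂ : ℝ} (ht₁ : 0 < t₁) (ht : t₁ ≤ t₂) :
    ‖critVec L M x d t₁‖ ^ 2 * critScalar L M x d t₂ ≤
      ⟪critVec L M x d t₁, critVec L M x d t₂⟫ * critScalar L M x d t₁ := by
  have ht₂ : 0 < t₂ := ht₁.trans_le ht
  have hScalar : ∀ t, 0 < t →
      critScalar L M x d t = (L * x ^ 2 * t + M * (t ^ 2 + d ^ 2)) / (x * t) := by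
    intro t ht
    unfold critScalar
    field_simp
  rw [norm_sq_critVec, inner_critVec, hScalar t₁ ht₁, hScalar t₂ ht₂, mul_div_assoc',
    mul_div_assoc', div_le_div_iff₀ (by positivity) (by positivity)]
  have hsos : 0 ≤ x * (t₂ - t₁) * (L * x ^ 2 * t₂ * (2 * t₁ - M * d) ^ 2
      + L * M * d ^ 2 * ((L - 2) * (x ^ 4 + d ^ 2) + 2 * (x ^ 2 + d) ^ 2)
      + L ^ 2 * M * d ^ 2 * t₁ ^ 2 + 2 * L * M ^ 2 * x ^ 2 * d ^ 2 * t₁) := by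
    have : 0 ≤ L - 2 := by linarith
    have : 0 ≤ t₂ - t₁ := by linarith
    positivity
  linear_combination hsos - (x * (t₂ - t₁)
    * ((L * t₁ + M * x ^ 2) * x ^ 2 * t₁ * t₂ - M * x ^ 4 * d ^ 2)) * hLM

end Cone

theorem criticality_nonpos_iff {l x y d : ℝ} (hl : 1 < l) (hx : 0 < x) (hxy : |d| < x * y) :
    criticality l x y d ≤ 0 ↔
      lamL l / 2 * critScalar (lamL l) (lamM l) x d √(x ^ 2 * y ^ 2 - d ^ 2) ^ 2 ≤
        ‖critVec (lamL l) (lamM l) x d √(x ^ 2 * y ^ 2 - d ^ 2)‖ ^ 2 := by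
  set L := lamL l
  set M := lamM l
  set t := √(x ^ 2 * y ^ 2 - d ^ 2)
  have hd := sq_lt_sq_mul_sq_of_abs_lt hxy
  have ht : 0 < t := sqrt_pos.2 (sub_pos.2 hd)
  have ht2 : t ^ 2 = x ^ 2 * y ^ 2 - d ^ 2 := sq_sqrt (sub_pos.2 hd).le
  have hL : 2 ≤ L := two_le_lamL (by positivity)
  have hM : 0 < M := lamM_pos hl
  have hnorm : ‖critVec L M x d t‖ ^ 2 = 2 * L * x ^ 2 * Afun l x y d := by
    rw [norm_sq_critVec, Afun_eq]
    linear_combination L ^ 2 * ht2 - x ^ 4 * lamL_sq (by positivity : l ≠ 0)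
  have hscalar : critScalar L M x d t = x * (L + M * y ^ 2 / t) := by
    rw [critScalar, ht2]
    field_simp
    ring
  have hα : 0 < (L + M * y ^ 2 / t) / 2 := by positivity
  calc criticality l x y d ≤ 0 ↔ (L + M * y ^ 2 / t) / 2 ≤ √(Afun l x y d) := by
        unfold criticality
        constructor <;> intro h <;> linarith
    _ ↔ ((L + M * y ^ 2 / t) / 2) ^ 2 ≤ Afun l x y d := le_sqrt' hα
    _ ↔ _ := by
        rw [hnorm, hscalar, show L / 2 * (x * (L + M * y ^ 2 / t)) ^ 2
          = 2 * L * x ^ 2 * ((L + M * y ^ 2 / t) / 2) ^ 2 by ring]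
        exact (mul_le_mul_iff_right₀ (by positivity)).symm

theorem criticality_nonpos_of_le {l x y₁ y₂ d : ℝ} (hl : 1 < l) (hy₁ : 0 < y₁) (hy : y₁ ≤ y₂)
    (hx : |d| / y₁ < x) (h : criticality l x y₁ d ≤ 0) : criticality l x y₂ d ≤ 0 := by
  rw [div_lt_iff₀ hy₁] at hx
  have hx0 : 0 < x := pos_of_mul_pos_left ((abs_nonneg d).trans_lt hx) hy₁.le
  have hxy : |d| < x * y₂ := hx.trans_le (by gcongr)
  have hd := sq_lt_sq_mul_sq_of_abs_lt hx
  have ht₁ : 0 < √(x ^ 2 * y₁ ^ 2 - d ^ 2) := sqrt_pos.2 (sub_pos.2 hd)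
  have ht : √(x ^ 2 * y₁ ^ 2 - d ^ 2) ≤ √(x ^ 2 * y₂ ^ 2 - d ^ 2) := by gcongr
  have hL := two_le_lamL (by positivity : l ≠ 0)
  have hM := lamM_pos hl
  rw [criticality_nonpos_iff hl hx0 hx] at h
  rw [criticality_nonpos_iff hl hx0 hxy]
  exact mul_sq_le_norm_sq_of_norm_sq_mul_le_inner_mul
    (critScalar_pos (by linarith) hM.le hx0 ht₁) (critScalar_pos (by linarith) hM.le hx0
      (ht₁.trans_le ht)).le h
    (norm_sq_critVec_mul_le_inner_mul hL hM.le (lamL_sq (by positivity)) hx0 ht₁ ht)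

/-- If `φ(y,d)` denotes, for each `y > 0`, the unique solution `x ∈ (|d|/y, ∞)` of
the criticality equation `L + M y²/√(x²y²−d²) = 2√(A(x,y,d))`, then `y ↦ φ(y,d)`
is monotonically nonincreasing. -/
theorem phi_antitone (l : ℝ) (hl : 1 < l) (d : ℝ) (φ : ℝ → ℝ → ℝ)
    (hφ : ∀ y : ℝ, 0 < y →
      |d| / y < φ y d ∧
      (l ^ 2 + 1 / l ^ 2)
          + (l ^ 2 - 1 / l ^ 2) * y ^ 2 / Real.sqrt ((φ y d) ^ 2 * y ^ 2 - d ^ 2)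
        = 2 * Real.sqrt (Afun l (φ y d) y d)) :
    ∀ y₁ y₂ : ℝ, 0 < y₁ → y₁ ≤ y₂ → φ y₂ d ≤ φ y₁ d := by
  intro y₁ y₂ hy₁ hy
  by_contra! hlt
  have hy₂ := hy₁.trans_le hy
  obtain ⟨hx₁, he₁⟩ := hφ y₁ hy₁
  obtain ⟨hx₂, he₂⟩ := hφ y₂ hy₂
  have hcrit₁ : criticality l (φ y₁ d) y₁ d = 0 := sub_eq_zero.2 he₁
  have hcrit₂ : criticality l (φ y₂ d) y₂ d = 0 := sub_eq_zero.2 he₂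
  have hx₁' : |d| / y₂ < φ y₁ d :=
    (div_le_div_of_nonneg_left (abs_nonneg d) hy₁ hy).trans_lt hx₁
  have hpos := criticality_strictAntiOn d hl hy₂ hx₁' hx₂ hlt
  have hnonpos := criticality_nonpos_of_le hl hy₁ hy hx₁ hcrit₁.le
  simp only at hpos
  linarith
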